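/- arXiv:0806.2114 — 5 statements merged into one kernel-verified Lean document; each statement's English description precedes it below -/
import Mathlib

section
/- For nonnegative integers n_1, ..., n_{k+1}, the number of permutations π of [n] (where n = n_1 + ... + n_{k+1} + k + 1) whose excedance set is a subset of S = {n_1+1, n_1+n_2+2, ..., n_1+...+n_k+k} (the k positions following the blocks of sizes n_1,...,n_k) equals 1^(n_1+1) · 2^(n_2+1) · ... · (k+1)^(n_{k+1}+1). -/
/-!
Composing with inversion and with the reversal `i ↦ n - 1 - i`, a permutation whose excedances
lie in `P` becomes a permutation `τ` with `τ w ∈ {i | rev w ≤ i ∨ P i}` for every `w`. These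
admissible sets increase with `w`, so `τ` can be chosen greedily: `τ 0, τ 1, …` have
`1 + #{i < v | P i}` free choices each, after reindexing by `v = rev w`. For the separator set the
count `#{i < v | P i}` equals `j` on the `ns j + 1` positions `v` just after the `j`-th separator
(or at the start, for `j = 0`), which gives `∏ j, (j + 1) ^ (ns j + 1)`.
-/

open Equiv Finset

section PermCount

variable {n : ℕ}

lemma card_filter_swap_zero_succ_mem (p : Fin (n + 1)) {s : Finset (Fin (n + 1))}
    (hp : p ∈ s) : #{x : Fin n | swap 0 p x.succ ∈ s} = #s - 1 := by
  have h := Fin.card_filter_univ_succ (fun y => swap 0 p y ∈ s)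
  have hall : #{y | swap 0 p y ∈ s} = #s := by
    rw [← card_map (swap 0 p).toEmbedding]
    congr 1
    ext y
    simp
  simp only [swap_apply_left, hp, if_true, hall] at h
  omega

lemma card_perm_forall_mem_succ (A : Fin (n + 1) → Finset (Fin (n + 1))) :
    Nat.card {σ : Perm (Fin (n + 1)) // ∀ i, σ i ∈ A i} =
      ∑ p ∈ A 0, Nat.card {e : Perm (Fin n) //
        ∀ i, e i ∈ ({x | swap 0 p x.succ ∈ A i.succ} : Finset (Fin n))} := by
  let P : Fin (n + 1) → Perm (Fin n) → Prop := fun p e =>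
    p ∈ A 0 ∧ ∀ i, swap 0 p (e i).succ ∈ A i.succ
  have hdecomp : {σ : Perm (Fin (n + 1)) // ∀ i, σ i ∈ A i} ≃ Σ p, {e // P p e} :=
    (Perm.decomposeFin.symm.subtypeEquiv fun ⟨p, e⟩ => by
      simp [P, Fin.forall_fin_succ, Perm.decomposeFin_symm_apply_zero,
        Perm.decomposeFin_symm_apply_succ]).symm.trans
      (subtypeProdEquivSigmaSubtype P)
  rw [Nat.card_congr hdecomp, Nat.card_sigma, ← sum_subset (subset_univ (A 0)) fun p _ hp => ?_]
  · refine sum_congr rfl fun p hp => Nat.card_congr (subtypeEquivRight fun e => ?_)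
    simp [P, hp]
  · have : IsEmpty {e // P p e} := ⟨fun e => hp e.2.1⟩
    exact Nat.card_of_isEmpty

theorem card_perm_forall_mem_of_monotone (A : Fin n → Finset (Fin n)) (hA : Monotone A)
    (hcard : ∀ i : Fin n, (i : ℕ) < #(A i)) :
    Nat.card {σ : Perm (Fin n) // ∀ i, σ i ∈ A i} = ∏ i, (#(A i) - (i : ℕ)) := by
  induction n with
  | zero => simp
  | succ n ih =>
    have hcard_succ : ∀ i : Fin n, (i : ℕ) < #(A i.succ) - 1 := fun i => by
      have := hcard i.succ
      rw [Fin.val_succ] at this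
      omega
    rw [card_perm_forall_mem_succ, Fin.prod_univ_succ, Fin.val_zero, Nat.sub_zero]
    calc _ = ∑ p ∈ A 0, ∏ i : Fin n, (#(A i.succ) - 1 - (i : ℕ)) := by
          refine sum_congr rfl fun p hp => ?_
          have hsub (i : Fin n) : #{x : Fin n | swap 0 p x.succ ∈ A i.succ} = #(A i.succ) - 1 :=
            card_filter_swap_zero_succ_mem p (hA (Fin.zero_le _) hp)
          refine (ih _ (fun i j hij x hx => ?_) fun i => hsub i ▸ hcard_succ i).trans ?_
          · simpa using hA (Fin.succ_le_succ_iff.2 hij) (by simpa using hx)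
          · simp_rw [hsub]
      _ = _ := by
          rw [sum_const, smul_eq_mul]
          congr 1
          refine prod_congr rfl fun i _ => ?_
          rw [Fin.val_succ]
          omega

lemma card_filter_rev_le_or (P : Fin n → Prop) [DecidablePred P] (w : Fin n) :
    #{i | w.rev ≤ i ∨ P i} = w + 1 + #{i | i < w.rev ∧ P i} := by
  have hsplit : ({i | w.rev ≤ i ∨ P i} : Finset (Fin n)) =
      ({i | w.rev ≤ i} : Finset (Fin n)) ∪ ({i | i < w.rev ∧ P i} : Finset (Fin n)) := by
    ext i
    simp only [mem_union, mem_filter, mem_univ, true_and]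
    constructor
    · rintro (h | h)
      · exact .inl h
      · exact (le_or_gt w.rev i).imp_right (⟨·, h⟩)
    · rintro (h | h)
      exacts [.inl h, .inr h.2]
  have hdisj : Disjoint ({i | w.rev ≤ i} : Finset (Fin n)) ({i | i < w.rev ∧ P i} : Finset (Fin n)) :=
    disjoint_filter.2 fun _ _ h h' => (h.trans_lt h'.1).false
  rw [hsplit, card_union_of_disjoint hdisj, filter_le_eq_Ici, Fin.card_Ici, Fin.val_rev]
  omega

theorem card_perm_excedance_subset (P : Fin n → Prop) [DecidablePred P] :
    Nat.card {σ : Perm (Fin n) // ∀ i, i < σ i → P i} = ∏ v : Fin n, (1 + #{i | i < v ∧ P i}) := by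
  let B : Fin n → Finset (Fin n) := fun w => {i | w.rev ≤ i ∨ P i}
  have hequiv : {σ : Perm (Fin n) // ∀ i, i < σ i → P i} ≃ {τ : Perm (Fin n) // ∀ w, τ w ∈ B w} :=
    ((Equiv.inv _).trans (Equiv.mulRight Fin.revPerm)).subtypeEquiv fun σ => by
      change _ ↔ ∀ w, σ⁻¹ w.rev ∈ B w
      simp only [B, mem_filter, mem_univ, true_and, imp_iff_not_or, not_lt]
      exact (σ.trans Fin.revPerm).forall_congr fun i => by simp
  have hB : Monotone B := fun w w' h i hi => by
    simp only [B, mem_filter, mem_univ, true_and] at hi ⊢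
    exact hi.imp_left (Fin.rev_le_rev.2 h).trans
  rw [Nat.card_congr hequiv, card_perm_forall_mem_of_monotone B hB fun w => ?_]
  · refine Fintype.prod_equiv Fin.revPerm _ _ fun w => ?_
    rw [card_filter_rev_le_or, Fin.revPerm_apply]
    omega
  · rw [card_filter_rev_le_or]
    omega

end PermCount

/-- The separator position `n₁ + ⋯ + n_{j+1} + j + 1` of `[n]`, shifted to the `0`-based
indexing of `Fin n` (with `ns` indexed from `0`). -/
def separatorPos (ns : ℕ → ℕ) (j : ℕ) : ℕ := ∑ m ∈ range (j + 1), ns m + j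

lemma separatorPos_strictMono (ns : ℕ → ℕ) : StrictMono (separatorPos ns) :=
  strictMono_nat_of_lt_succ fun j => by
    rw [separatorPos, separatorPos, sum_range_succ _ (j + 1)]
    omega

lemma separatorPos_zero (ns : ℕ → ℕ) : separatorPos ns 0 = ns 0 := by
  simp [separatorPos]

lemma separatorPos_succ (ns : ℕ → ℕ) (k : ℕ) :
    separatorPos ns (k + 1) = separatorPos ns k + ns (k + 1) + 1 := by
  rw [separatorPos, separatorPos, sum_range_succ _ (k + 1)]
  ring

lemma prod_one_add_card_separatorPos_lt (ns : ℕ → ℕ) (k : ℕ) :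
    ∏ v ∈ range (separatorPos ns k + 1), (1 + #{j ∈ range k | separatorPos ns j < v}) =
      ∏ j ∈ range (k + 1), (j + 1) ^ (ns j + 1) := by
  induction k with
  | zero => simp [separatorPos_zero]
  | succ k ih =>
    have hmono := (separatorPos_strictMono ns).monotone
    have hlow : ∏ v ∈ range (separatorPos ns k + 1),
        (1 + #{j ∈ range (k + 1) | separatorPos ns j < v}) =
          ∏ v ∈ range (separatorPos ns k + 1), (1 + #{j ∈ range k | separatorPos ns j < v}) :=
      prod_congr rfl fun v hv => by
        rw [range_add_one, filter_insert, if_neg (by simpa using hv)]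
    have hhigh : ∏ t ∈ range (ns (k + 1) + 1),
        (1 + #{j ∈ range (k + 1) | separatorPos ns j < separatorPos ns k + 1 + t}) =
          (k + 1 + 1) ^ (ns (k + 1) + 1) := by
      rw [prod_congr rfl (g := fun _ => k + 1 + 1) fun t _ => ?_, prod_const, card_range]
      rw [filter_true_of_mem fun j hj => ?_, card_range, add_comm]
      have := hmono (Nat.lt_succ_iff.1 (mem_range.1 hj))
      omega
    rw [separatorPos_succ, show separatorPos ns k + ns (k + 1) + 1 + 1 =
        separatorPos ns k + 1 + (ns (k + 1) + 1) by ring, prod_range_add, hlow, hhigh, ih,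
      prod_range_succ _ (k + 1)]

lemma card_filter_lt_and_exists_eq {n k : ℕ} {f : ℕ → ℕ} (hf : f.Injective) (v : Fin n) :
    #{i : Fin n | i < v ∧ ∃ j < k, (i : ℕ) = f j} = #{j ∈ range k | f j < v} := by
  symm
  refine card_bij (fun j hj => ⟨f j, (mem_filter.1 hj).2.trans v.isLt⟩) (fun j hj => ?_)
    (fun a _ b _ hab => hf (Fin.val_eq_of_eq hab)) fun i hi => ?_
  · simp only [mem_filter, mem_range] at hj
    simp only [mem_filter, mem_univ, true_and]
    exact ⟨hj.2, j, hj.1, rfl⟩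
  · simp only [mem_filter, mem_univ, true_and] at hi
    obtain ⟨hiv, j, hjk, hij⟩ := hi
    exact ⟨j, mem_filter.2 ⟨mem_range.2 hjk, hij ▸ hiv⟩, Fin.ext hij.symm⟩

/-- Ehrenborg–Steingrimsson lemma: the number of permutations of `[n]`,
`n = n₁ + ⋯ + n_{k+1} + k + 1`, whose excedance set is contained in the set of
`k` separator positions following the blocks of sizes `n₁,…,n_k`, equals
`1^(n₁+1) · 2^(n₂+1) ⋯ (k+1)^(n_{k+1}+1)`. -/
theorem stmt2 (k n : ℕ) (ns : ℕ → ℕ)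
    (hn : n = (∑ i ∈ Finset.range (k + 1), ns i) + k + 1) :
    Nat.card {σ : Equiv.Perm (Fin n) //
        ∀ i : Fin n, (i : ℕ) < (σ i : ℕ) →
          ∃ j < k, (i : ℕ) = (∑ m ∈ Finset.range (j + 1), ns m) + j}
      = ∏ i ∈ Finset.range (k + 1), (i + 1) ^ (ns i + 1) := by
  obtain rfl : n = separatorPos ns k + 1 := hn
  calc _ = ∏ v : Fin (separatorPos ns k + 1),
        (1 + #{i | i < v ∧ ∃ j < k, (i : ℕ) = separatorPos ns j}) :=
        card_perm_excedance_subset _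
    _ = ∏ v : Fin (separatorPos ns k + 1), (1 + #{j ∈ range k | separatorPos ns j < v}) := by
        simp_rw [card_filter_lt_and_exists_eq (separatorPos_strictMono ns).injective]
    _ = ∏ v ∈ range (separatorPos ns k + 1), (1 + #{j ∈ range k | separatorPos ns j < v}) :=
        Fin.prod_univ_eq_prod_range (fun v => 1 + #{j ∈ range k | separatorPos ns j < v}) _
    _ = _ := prod_one_add_card_separatorPos_lt ns k
end

section
/- Let w = a^{n_1} b a^{n_2} b ··· a^{n_k} b a^{n_{k+1}} be an ab-word of length n-1 with exactly k letters b, and let E(w) = {n_1+1, n_1+n_2+2, ..., n_1+...+n_k+k} be the set of positions of the b's. Then the number of permutations π of [n] with Exc(π) = E(w) equals ∑_{r ∈ R_k} (-1)^{h(r)} · r_1^{n_1+1} · r_2^{n_2+1} ··· r_{k+1}^{n_{k+1}+1}, where R_k = {(r_1,...,r_{k+1}) : r_1 = 1, r_{i+1} - r_i ∈ {0,1} for all i}, and h(r) = |{i ∈ {1,...,k} : r_i = r_{i+1}}|. -/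
open Equiv Finset

variable {n : ℕ} (P : ℕ → Prop) [DecidablePred P]

/-- condition: all excedance positions satisfy `P`. -/
def EScond {m : ℕ} (σ : Equiv.Perm (Fin m)) : Prop :=
  ∀ i : Fin m, (i : ℕ) < (σ i : ℕ) → P i

instance {m : ℕ} : DecidablePred (EScond P (m := m)) := fun _ =>
  Fintype.decidableForallFintype

/-- extend a permutation of `Fin n` to `Fin (n+1)` fixing the last element. -/
def extPerm (τ : Equiv.Perm (Fin n)) : Equiv.Perm (Fin (n + 1)) :=
  finSuccEquivLast.symm.permCongr τ.optionCongr

lemma extPerm_castSucc (τ : Equiv.Perm (Fin n)) (j : Fin n) :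
    extPerm τ j.castSucc = (τ j).castSucc := by
  simp [extPerm, Equiv.permCongr_apply]

lemma extPerm_last (τ : Equiv.Perm (Fin n)) :
    extPerm τ (Fin.last n) = Fin.last n := by
  simp [extPerm, Equiv.permCongr_apply]

def mkPerm (p : Fin (n + 1)) (τ : Equiv.Perm (Fin n)) : Equiv.Perm (Fin (n + 1)) :=
  extPerm τ * Equiv.swap p (Fin.last n)

lemma mkPerm_apply_p (p : Fin (n + 1)) (τ : Equiv.Perm (Fin n)) :
    mkPerm p τ p = Fin.last n := by
  simp [mkPerm, Equiv.Perm.mul_apply, extPerm_last]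

lemma mkPerm_castSucc (p : Fin (n + 1)) (τ : Equiv.Perm (Fin n)) (j : Fin n)
    (h : j.castSucc ≠ p) : mkPerm p τ j.castSucc = (τ j).castSucc := by
  rw [mkPerm, Equiv.Perm.mul_apply,
    Equiv.swap_apply_of_ne_of_ne h (Fin.castSucc_lt_last j).ne, extPerm_castSucc]

def unmk (π : Equiv.Perm (Fin (n + 1))) : Equiv.Perm (Fin n) :=
  (finSuccEquivLast.permCongr π).removeNone

lemma unmk_spec (π : Equiv.Perm (Fin (n + 1))) (hπ : π (Fin.last n) = Fin.last n)
    (j : Fin n) : (unmk π j).castSucc = π j.castSucc := by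
  have hne : π j.castSucc ≠ Fin.last n := fun h =>
    absurd (π.injective (h.trans hπ.symm)) (Fin.castSucc_lt_last j).ne
  obtain ⟨m, hm⟩ := Fin.exists_castSucc_eq.2 hne
  have he : (finSuccEquivLast.permCongr π) (some j) = some m := by
    simp [Equiv.permCongr_apply, ← hm]
  have h2 := Equiv.removeNone_some (finSuccEquivLast.permCongr π) (x := j) ⟨m, he⟩
  rw [he] at h2
  rw [← hm]
  exact congrArg Fin.castSucc (Option.some_injective _ h2)

lemma ext_unmk (π : Equiv.Perm (Fin (n + 1))) (hπ : π (Fin.last n) = Fin.last n) :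
    extPerm (unmk π) = π := by
  ext x
  by_cases hxl : x = Fin.last n
  · subst hxl; rw [extPerm_last, hπ]
  · obtain ⟨j, rfl⟩ := Fin.exists_castSucc_eq.2 hxl
    rw [extPerm_castSucc, unmk_spec π hπ]

lemma unmk_extPerm (τ : Equiv.Perm (Fin n)) : unmk (extPerm τ) = τ := by
  ext j
  have := unmk_spec (extPerm τ) (extPerm_last τ) j
  rw [extPerm_castSucc] at this
  exact congrArg Fin.val (Fin.castSucc_injective n this)

lemma sigma_decomp (σ : Equiv.Perm (Fin (n + 1))) :
    σ = mkPerm (σ⁻¹ (Fin.last n)) (unmk (σ * Equiv.swap (σ⁻¹ (Fin.last n)) (Fin.last n))) := by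
  have hfix : (σ * Equiv.swap (σ⁻¹ (Fin.last n)) (Fin.last n)) (Fin.last n) = Fin.last n := by
    simp [Equiv.Perm.mul_apply]
  rw [mkPerm, ext_unmk _ hfix, mul_assoc, Equiv.swap_mul_self, mul_one]

omit [DecidablePred P] in
lemma cond_mk_iff (p : Fin (n + 1)) (τ : Equiv.Perm (Fin n)) :
    EScond P (mkPerm p τ) ↔ ((p = Fin.last n ∨ P p) ∧ EScond P τ) := by
  constructor
  · intro h
    have hp : p ≠ Fin.last n → P p := by
      intro hne
      apply h p
      rw [mkPerm_apply_p]
      exact Fin.val_lt_last hne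
    constructor
    · by_cases hc : p = Fin.last n
      · exact Or.inl hc
      · exact Or.inr (hp hc)
    · intro j hj
      by_cases hc : j.castSucc = p
      · have hv : (j : ℕ) = (p : ℕ) := by rw [← hc]; rfl
        rw [hv]
        exact hp (hc ▸ (Fin.castSucc_lt_last j).ne)
      · apply h j.castSucc
        rw [mkPerm_castSucc p τ j hc]
        simpa using hj
  · rintro ⟨hp, hτ⟩ x hx
    by_cases hxp : x = p
    · subst hxp
      rcases hp with h | h
      · rw [h, mkPerm_apply_p] at hx; exact absurd hx (lt_irrefl _)
      · exact h
    · by_cases hxl : x = Fin.last n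
      · subst hxl
        simp only [Fin.val_last] at hx
        exact absurd hx (Nat.not_lt.2 (Fin.is_le _))
      · obtain ⟨j, rfl⟩ := Fin.exists_castSucc_eq.2 hxl
        rw [mkPerm_castSucc p τ j hxp] at hx
        exact hτ j (by simpa using hx)

lemma cardA (n : ℕ) :
    Nat.card {σ : Equiv.Perm (Fin (n + 1)) // EScond P σ} =
      (((Finset.range n).filter P).card + 1) *
        Nat.card {σ : Equiv.Perm (Fin n) // EScond P σ} := by
  have E : {σ : Equiv.Perm (Fin (n + 1)) // EScond P σ} ≃
      ({p : Fin (n + 1) // p = Fin.last n ∨ P (p : ℕ)} ×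
        {σ : Equiv.Perm (Fin n) // EScond P σ}) :=
  { toFun := fun σ =>
      (⟨σ.1⁻¹ (Fin.last n), ((cond_mk_iff P _ _).1 ((sigma_decomp σ.1) ▸ σ.2)).1⟩,
      ⟨unmk (σ.1 * Equiv.swap (σ.1⁻¹ (Fin.last n)) (Fin.last n)),
        ((cond_mk_iff P _ _).1 ((sigma_decomp σ.1) ▸ σ.2)).2⟩)
    invFun := fun x => ⟨mkPerm x.1.1 x.2.1, (cond_mk_iff P _ _).2 ⟨x.1.2, x.2.2⟩⟩
    left_inv := fun σ => Subtype.ext (sigma_decomp σ.1).symm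
    right_inv := by
      rintro ⟨⟨p, hp⟩, ⟨τ, hτ⟩⟩
      have h1 : (mkPerm p τ)⁻¹ (Fin.last n) = p := by
        rw [Equiv.Perm.inv_eq_iff_eq, mkPerm_apply_p]
      refine Prod.ext (Subtype.ext h1) (Subtype.ext ?_)
      show unmk (mkPerm p τ * Equiv.swap ((mkPerm p τ)⁻¹ (Fin.last n)) (Fin.last n)) = τ
      rw [h1, mkPerm, mul_assoc, Equiv.swap_mul_self, mul_one, unmk_extPerm] }
  rw [Nat.card_congr E, Nat.card_prod]
  congr 1
  rw [Nat.card_eq_fintype_card, Fintype.card_subtype, Finset.card_filter,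
    Fin.sum_univ_castSucc]
  have hrw : ∀ i : Fin n,
      (if ((i.castSucc = Fin.last n) ∨ P ((i.castSucc : Fin (n+1)) : ℕ)) then 1 else 0)
        = (if P (i : ℕ) then 1 else 0) := by
    intro i
    have : (i.castSucc = Fin.last n ∨ P ((i.castSucc : Fin (n+1)) : ℕ)) ↔ P (i : ℕ) := by
      rw [or_iff_right (Fin.castSucc_lt_last i).ne]
      simp
    simp only [this]
  rw [Finset.sum_congr rfl (fun i _ => hrw i),
    Fin.sum_univ_eq_sum_range (fun i => if P i then 1 else 0) n,
    ← Finset.card_filter, if_pos (Or.inl rfl)]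

lemma cardB (n : ℕ) :
    Nat.card {σ : Equiv.Perm (Fin n) // EScond P σ} =
      ∏ x ∈ Finset.range n, (1 + ((Finset.range x).filter P).card) := by
  induction n with
  | zero =>
    rw [Finset.prod_range_zero, Nat.card_eq_fintype_card, Fintype.card_subtype]
    have hall : ∀ σ : Equiv.Perm (Fin 0), EScond P σ := fun σ i => i.elim0
    rw [Finset.filter_true_of_mem (fun x _ => hall x)]
    simp
  | succ m ih =>
    rw [cardA, ih, Finset.prod_range_succ, Nat.add_comm _ 1, Nat.mul_comm]

/-- separator positions -/
def sep (ns : ℕ → ℕ) (j : ℕ) : ℕ := (∑ m ∈ Finset.range (j + 1), ns m) + j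

lemma sep_strictMono (ns : ℕ → ℕ) : StrictMono (sep ns) := by
  apply strictMono_nat_of_lt_succ
  intro j
  unfold sep
  rw [Finset.sum_range_succ (n := j + 1)]
  omega

lemma N_eq_sum_M (k n : ℕ) (ns : ℕ → ℕ) (hlt : ∀ j < k, sep ns j < n)
    (S : Finset ℕ) (hS : S ⊆ Finset.range k) :
    Nat.card {σ : Equiv.Perm (Fin n) // EScond (· ∈ S.image (sep ns)) σ}
      = ∑ T ∈ S.powerset, Nat.card {σ : Equiv.Perm (Fin n) //
          ∀ i : Fin n, ((i : ℕ) < (σ i : ℕ) ↔ (i : ℕ) ∈ T.image (sep ns))} := by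
  classical
  rw [Nat.card_eq_fintype_card, Fintype.card_subtype]
  rw [Finset.card_eq_sum_card_fiberwise
    (f := fun σ : Equiv.Perm (Fin n) =>
      S.filter (fun j => ∃ i : Fin n, (i : ℕ) = sep ns j ∧ (i : ℕ) < (σ i : ℕ)))
    (t := S.powerset)
    (fun σ _ => Finset.mem_powerset.2 (Finset.filter_subset _ _))]
  refine Finset.sum_congr rfl (fun T hT => ?_)
  rw [Nat.card_eq_fintype_card, Fintype.card_subtype, Finset.filter_filter]
  congr 1
  apply Finset.filter_congr
  intro σ _
  have hTS : T ⊆ S := Finset.mem_powerset.1 hT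

  constructor
  · rintro ⟨hN, hfT⟩ i
    constructor
    · intro hexc
      obtain ⟨j, hjS, hji⟩ := Finset.mem_image.1 (hN i hexc)
      have hjT : j ∈ T := by
        rw [← hfT]
        exact Finset.mem_filter.2 ⟨hjS, ⟨i, hji.symm, hexc⟩⟩
      exact Finset.mem_image.2 ⟨j, hjT, hji⟩
    · intro hmem
      obtain ⟨j, hjT, hji⟩ := Finset.mem_image.1 hmem
      have hjf : j ∈ S.filter (fun j => ∃ i : Fin n,
          (i : ℕ) = sep ns j ∧ (i : ℕ) < (σ i : ℕ)) := by rw [hfT]; exact hjT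
      obtain ⟨-, i', hi'val, hi'exc⟩ := Finset.mem_filter.1 hjf
      have hii : i' = i := Fin.ext (by rw [hi'val, hji])
      exact hii ▸ hi'exc
  · intro hM
    constructor
    · intro i hexc
      exact Finset.image_subset_image hTS ((hM i).1 hexc)
    · ext j
      simp only [Finset.mem_filter]
      constructor
      · rintro ⟨hjS, i, hival, hiexc⟩
        obtain ⟨j', hj'T, hj'i⟩ := Finset.mem_image.1 ((hM i).1 hiexc)
        have : j' = j := (sep_strictMono ns).injective (by rw [hj'i, hival])
        exact this ▸ hj'T
      · intro hjT
        refine ⟨hTS hjT, ?_⟩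
        have hj : j < k := Finset.mem_range.1 (hS (hTS hjT))
        refine ⟨⟨sep ns j, hlt j hj⟩, rfl, ?_⟩
        exact (hM ⟨sep ns j, hlt j hj⟩).2 (Finset.mem_image.2 ⟨j, hjT, rfl⟩)

lemma inner_sign_sum (k : ℕ) (T : Finset ℕ) (hT : T ⊆ Finset.range k) :
    ∑ S ∈ (Finset.range k).powerset.filter (fun S => T ⊆ S), (-1 : ℤ) ^ (k - S.card)
      = if T = Finset.range k then 1 else 0 := by
  classical
  have key : ∑ S ∈ (Finset.range k).powerset.filter (fun S => T ⊆ S),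
      (-1 : ℤ) ^ (k - S.card)
      = ∑ U ∈ ((Finset.range k) \ T).powerset,
          (-1 : ℤ) ^ (k - T.card) * (-1) ^ U.card := by
    refine Finset.sum_nbij' (fun S => S \ T) (fun U => T ∪ U) ?_ ?_ ?_ ?_ ?_
    · intro S hS
      obtain ⟨hSr, hTS⟩ := Finset.mem_filter.1 hS
      exact Finset.mem_powerset.2
        (Finset.sdiff_subset_sdiff (Finset.mem_powerset.1 hSr) le_rfl)
    · intro U hU
      have hU' := Finset.mem_powerset.1 hU
      refine Finset.mem_filter.2 ⟨Finset.mem_powerset.2 ?_, Finset.subset_union_left⟩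
      exact Finset.union_subset hT (hU'.trans Finset.sdiff_subset)
    · intro S hS
      exact Finset.union_sdiff_of_subset (Finset.mem_filter.1 hS).2
    · intro U hU
      exact Finset.union_sdiff_cancel_left
        (Finset.disjoint_of_subset_right (Finset.mem_powerset.1 hU)
          Finset.disjoint_sdiff)
    · intro S hS
      obtain ⟨hSr, hTS⟩ := Finset.mem_filter.1 hS
      have hSr' := Finset.mem_powerset.1 hSr
      have hcard : (S \ T).card + T.card = S.card :=
        Finset.card_sdiff_add_card_eq_card hTS
      have hSk : S.card ≤ k := by
        have := Finset.card_le_card hSr'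
        simpa using this
      set u := (S \ T).card
      have e1 : (k - (T.card + u)) + u = k - T.card := by omega
      have e2 : (-1 : ℤ) ^ ((k - (T.card + u)) + u) = (-1) ^ (k - T.card) := by rw [e1]
      rw [pow_add] at e2
      have e3 : ((-1 : ℤ) ^ u) * ((-1) ^ u) = 1 := by
        rw [← pow_add]
        exact Even.neg_one_pow ⟨u, rfl⟩
      calc (-1 : ℤ) ^ (k - S.card) = (-1) ^ (k - (T.card + u)) := by
            congr 1; omega
        _ = (-1) ^ (k - (T.card + u)) * ((-1) ^ u * (-1) ^ u) := by rw [e3, mul_one]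
        _ = ((-1) ^ (k - (T.card + u)) * (-1) ^ u) * (-1) ^ u := by ring
        _ = (-1) ^ (k - T.card) * (-1) ^ u := by rw [e2]
  rw [key, ← Finset.mul_sum, Finset.sum_powerset_neg_one_pow_card]
  by_cases hc : T = Finset.range k
  · subst hc
    rw [if_pos (Finset.sdiff_self _), if_pos rfl]
    simp
  · rw [if_neg, if_neg hc, mul_zero]
    intro hempty
    exact hc (le_antisymm hT (Finset.sdiff_eq_empty_iff_subset.1 hempty))

lemma M_eq_alt_sum (k n : ℕ) (ns : ℕ → ℕ) (hlt : ∀ j < k, sep ns j < n) :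
    (Nat.card {σ : Equiv.Perm (Fin n) // ∀ i : Fin n,
        ((i : ℕ) < (σ i : ℕ) ↔ (i : ℕ) ∈ (Finset.range k).image (sep ns))} : ℤ)
      = ∑ S ∈ (Finset.range k).powerset, (-1 : ℤ) ^ (k - S.card) *
          (Nat.card {σ : Equiv.Perm (Fin n) // EScond (· ∈ S.image (sep ns)) σ} : ℤ) := by
  classical
  have h2 : ∀ S ∈ (Finset.range k).powerset,
      (-1 : ℤ) ^ (k - S.card) *
          (Nat.card {σ : Equiv.Perm (Fin n) // EScond (· ∈ S.image (sep ns)) σ} : ℤ)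
        = ∑ T ∈ S.powerset, (-1 : ℤ) ^ (k - S.card) *
            (Nat.card {σ : Equiv.Perm (Fin n) // ∀ i : Fin n,
              ((i : ℕ) < (σ i : ℕ) ↔ (i : ℕ) ∈ T.image (sep ns))} : ℤ) := by
    intro S hS
    rw [N_eq_sum_M k n ns hlt S (Finset.mem_powerset.1 hS)]
    push_cast
    rw [Finset.mul_sum]
  rw [Finset.sum_congr rfl h2]
  rw [Finset.sum_comm' (t' := (Finset.range k).powerset)
    (s' := fun T => (Finset.range k).powerset.filter (fun S => T ⊆ S))
    (by
      intro S T
      simp only [Finset.mem_powerset, Finset.mem_filter]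
      constructor
      · rintro ⟨h1, h2⟩; exact ⟨⟨h1, h2⟩, h2.trans h1⟩
      · rintro ⟨⟨h1, h2⟩, _⟩; exact ⟨h1, h2⟩)]
  have h3 : ∀ T ∈ (Finset.range k).powerset,
      (∑ S ∈ (Finset.range k).powerset.filter (fun S => T ⊆ S),
        (-1 : ℤ) ^ (k - S.card) *
          (Nat.card {σ : Equiv.Perm (Fin n) // ∀ i : Fin n,
            ((i : ℕ) < (σ i : ℕ) ↔ (i : ℕ) ∈ T.image (sep ns))} : ℤ))
      = (if T = Finset.range k then (Nat.card {σ : Equiv.Perm (Fin n) // ∀ i : Fin n,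
            ((i : ℕ) < (σ i : ℕ) ↔ (i : ℕ) ∈ T.image (sep ns))} : ℤ) else 0) := by
    intro T hT
    rw [← Finset.sum_mul, inner_sign_sum k T (Finset.mem_powerset.1 hT)]
    by_cases hc : T = Finset.range k
    · rw [if_pos hc, if_pos hc, one_mul]
    · rw [if_neg hc, if_neg hc, zero_mul]
  rw [Finset.sum_congr rfl h3, Finset.sum_ite_eq' _ (Finset.range k)]
  rw [if_pos (Finset.mem_powerset.2 le_rfl)]

lemma filter_image_card (ns : ℕ → ℕ) (S : Finset ℕ) (x : ℕ) :
    ((Finset.range x).filter (· ∈ S.image (sep ns))).card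
      = (S.filter (fun j => sep ns j < x)).card := by
  classical
  have himg : (Finset.range x).filter (· ∈ S.image (sep ns))
      = (S.filter (fun j => sep ns j < x)).image (sep ns) := by
    ext m
    simp only [Finset.mem_filter, Finset.mem_image, Finset.mem_range]
    constructor
    · rintro ⟨hm, j, hj, rfl⟩
      exact ⟨j, ⟨hj, hm⟩, rfl⟩
    · rintro ⟨j, ⟨hj, hm⟩, rfl⟩
      exact ⟨hm, j, hj, rfl⟩
  rw [himg, Finset.card_image_of_injective _ (sep_strictMono ns).injective]

lemma N_eq_prod (k n : ℕ) (ns : ℕ → ℕ)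
    (hn : n = (∑ i ∈ Finset.range (k + 1), ns i) + k + 1)
    (S : Finset ℕ) (hS : S ⊆ Finset.range k) :
    Nat.card {σ : Equiv.Perm (Fin n) // EScond (· ∈ S.image (sep ns)) σ}
      = ∏ i ∈ Finset.range (k + 1),
          (1 + (S.filter (· < i)).card) ^ (ns i + 1) := by
  classical
  rw [cardB]
  have hcongr : ∀ x ∈ Finset.range n,
      (1 + ((Finset.range x).filter (· ∈ S.image (sep ns))).card)
        = (1 + (S.filter (fun j => sep ns j < x)).card) := by
    intro x _
    rw [filter_image_card]
  rw [Finset.prod_congr rfl hcongr]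
  have key : ∀ t, t ≤ k + 1 →
      ∏ x ∈ Finset.range ((∑ m ∈ Finset.range t, ns m) + t),
        (1 + (S.filter (fun j => sep ns j < x)).card)
      = ∏ i ∈ Finset.range t, (1 + (S.filter (· < i)).card) ^ (ns i + 1) := by
    intro t
    induction t with
    | zero => intro _; simp
    | succ u ih =>
      intro hu
      have ihu := ih (by omega)
      set a := (∑ m ∈ Finset.range u, ns m) + u with ha
      have hb : (∑ m ∈ Finset.range (u + 1), ns m) + (u + 1) = a + (ns u + 1) := by
        rw [Finset.sum_range_succ]; omega
      rw [hb, ← Finset.prod_range_mul_prod_Ico _ (Nat.le_add_right a (ns u + 1)), ihu]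
      have hconst : ∀ x ∈ Finset.Ico a (a + (ns u + 1)),
          (1 + (S.filter (fun j => sep ns j < x)).card)
            = (1 + (S.filter (· < u)).card) := by
        intro x hx
        obtain ⟨hx1, hx2⟩ := Finset.mem_Ico.1 hx
        congr 1
        apply congrArg Finset.card
        apply Finset.filter_congr
        intro j hjS
        have hjk : j < k := Finset.mem_range.1 (hS hjS)
        constructor
        · intro hsep
          by_contra hju
          push_neg at hju
          have hsum : ∑ m ∈ Finset.range (u + 1), ns m ≤ ∑ m ∈ Finset.range (j + 1), ns m :=
            Finset.sum_le_sum_of_subset (Finset.range_subset_range.2 (by omega))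
          have : x ≤ sep ns j := by
            unfold sep
            rw [Finset.sum_range_succ] at hsum
            omega
          omega
        · intro hju
          have hsum : ∑ m ∈ Finset.range (j + 1), ns m ≤ ∑ m ∈ Finset.range u, ns m :=
            Finset.sum_le_sum_of_subset (Finset.range_subset_range.2 (by omega))
          have : sep ns j < a := by
            unfold sep; rw [ha]; omega
          omega
      have hc2 : a + (ns u + 1) - a = ns u + 1 := by omega
      rw [Finset.prod_congr rfl hconst, Finset.prod_const, Nat.card_Ico, hc2,
        Finset.prod_range_succ]
  have hn' : n = (∑ m ∈ Finset.range (k + 1), ns m) + (k + 1) := by omega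
  rw [hn']
  exact key (k + 1) le_rfl

lemma filtercard_succ (S : Finset ℕ) (i : ℕ) :
    (S.filter (· < i + 1)).card = (S.filter (· < i)).card + (if i ∈ S then 1 else 0) := by
  classical
  have h1 : S.filter (· < i + 1) = S.filter (· < i) ∪ S.filter (· = i) := by
    rw [← Finset.filter_or]
    apply Finset.filter_congr
    intro x _
    constructor <;> (intro h; omega)
  have hdisj : Disjoint (S.filter (· < i)) (S.filter (· = i)) := by
    rw [Finset.disjoint_left]
    intro a ha hb
    have h1 := (Finset.mem_filter.1 ha).2
    have h2 := (Finset.mem_filter.1 hb).2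
    omega
  rw [h1, Finset.card_union_of_disjoint hdisj, Finset.filter_eq']
  split_ifs <;> simp

def Phi (k : ℕ) (S : Finset ℕ) : Fin (k + 1) → Fin (k + 2) := fun i =>
  ⟨1 + (S.filter (· < (i : ℕ))).card, by
    have h1 : (S.filter (· < (i : ℕ))).card ≤ (i : ℕ) := by
      calc (S.filter (· < (i : ℕ))).card
          ≤ (Finset.range (i : ℕ)).card := Finset.card_le_card
            (fun x hx => Finset.mem_range.2 (Finset.mem_filter.1 hx).2)
        _ = (i : ℕ) := Finset.card_range _
    have h2 := i.is_le
    omega⟩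

def Psi (k : ℕ) (rv : Fin (k + 1) → Fin (k + 2)) : Finset ℕ :=
  (Finset.range k).filter (fun m => ∃ h : m < k,
    (rv (Fin.succ ⟨m, h⟩) : ℕ) = (rv (Fin.castSucc ⟨m, h⟩) : ℕ) + 1)

lemma Phi_zero (k : ℕ) (S : Finset ℕ) : (Phi k S 0 : ℕ) = 1 := by
  show 1 + (S.filter (· < ((0 : Fin (k + 1)) : ℕ))).card = 1
  have : ((0 : Fin (k + 1)) : ℕ) = 0 := rfl
  rw [this]
  have : S.filter (· < 0) = ∅ :=
    Finset.filter_false_of_mem (fun x _ => by omega)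
  rw [this]
  simp

lemma Phi_succ (k : ℕ) (S : Finset ℕ) (i : Fin k) :
    (Phi k S i.succ : ℕ) = (Phi k S i.castSucc : ℕ) + (if (i : ℕ) ∈ S then 1 else 0) := by
  show 1 + (S.filter (· < (i.succ : ℕ))).card
    = 1 + (S.filter (· < (i.castSucc : ℕ))).card + _
  rw [Fin.val_succ, Fin.coe_castSucc, filtercard_succ]
  omega

lemma Phi_mem_filter (k : ℕ) (S : Finset ℕ) :
    Phi k S ∈ Finset.univ.filter (fun rv : Fin (k + 1) → Fin (k + 2) =>
      (rv 0 : ℕ) = 1 ∧ ∀ i : Fin k,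
        (rv i.succ : ℕ) = (rv i.castSucc : ℕ) ∨
        (rv i.succ : ℕ) = (rv i.castSucc : ℕ) + 1) := by
  refine Finset.mem_filter.2 ⟨Finset.mem_univ _, Phi_zero k S, fun i => ?_⟩
  rw [Phi_succ]
  by_cases h : (i : ℕ) ∈ S
  · rw [if_pos h]; right; rfl
  · rw [if_neg h]; left; omega

lemma Psi_Phi (k : ℕ) (S : Finset ℕ) (hS : S ⊆ Finset.range k) :
    Psi k (Phi k S) = S := by
  ext m
  simp only [Psi, Finset.mem_filter, Finset.mem_range]
  constructor
  · rintro ⟨hmk, h, heq⟩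
    have h1 : (Phi k S (Fin.succ ⟨m, h⟩) : ℕ)
        = (Phi k S (Fin.castSucc ⟨m, h⟩) : ℕ) + (if m ∈ S then 1 else 0) :=
      Phi_succ k S ⟨m, h⟩
    by_contra hm
    rw [if_neg hm] at h1
    omega
  · intro hmS
    have hmk : m < k := Finset.mem_range.1 (hS hmS)
    refine ⟨hmk, hmk, ?_⟩
    have h1 : (Phi k S (Fin.succ ⟨m, hmk⟩) : ℕ)
        = (Phi k S (Fin.castSucc ⟨m, hmk⟩) : ℕ) + (if m ∈ S then 1 else 0) :=
      Phi_succ k S ⟨m, hmk⟩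
    rw [if_pos hmS] at h1
    exact h1

lemma Psi_subset (k : ℕ) (rv : Fin (k + 1) → Fin (k + 2)) :
    Psi k rv ⊆ Finset.range k := Finset.filter_subset _ _

lemma Phi_Psi (k : ℕ) (rv : Fin (k + 1) → Fin (k + 2))
    (h0 : (rv 0 : ℕ) = 1)
    (hstep : ∀ i : Fin k, (rv i.succ : ℕ) = (rv i.castSucc : ℕ) ∨
        (rv i.succ : ℕ) = (rv i.castSucc : ℕ) + 1) :
    Phi k (Psi k rv) = rv := by
  have main : ∀ m (hm : m < k + 1),
      (rv ⟨m, hm⟩ : ℕ) = 1 + ((Psi k rv).filter (· < m)).card := by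
    intro m
    induction m with
    | zero =>
      intro hm
      have he : (⟨0, hm⟩ : Fin (k + 1)) = 0 := rfl
      rw [he, h0]
      have : (Psi k rv).filter (· < 0) = ∅ :=
        Finset.filter_false_of_mem (fun x _ => by omega)
      rw [this]
      simp
    | succ m ih =>
      intro hm
      have hmk : m < k := by omega
      have ihm := ih (by omega)
      have hsucc : (⟨m + 1, hm⟩ : Fin (k + 1)) = (Fin.succ ⟨m, hmk⟩) := rfl
      have hcast : (⟨m, by omega⟩ : Fin (k + 1)) = (Fin.castSucc ⟨m, hmk⟩) := rfl
      rw [hsucc, filtercard_succ]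
      rcases hstep ⟨m, hmk⟩ with heq | heq
      · have hnot : m ∉ Psi k rv := by
          intro hmem
          obtain ⟨-, h', heq'⟩ := Finset.mem_filter.1 hmem
          have heq'' : (rv (Fin.succ ⟨m, hmk⟩) : ℕ)
              = (rv (Fin.castSucc ⟨m, hmk⟩) : ℕ) + 1 := heq'
          omega
        rw [if_neg hnot, heq, ← hcast, ihm]
        omega
      · have hmem : m ∈ Psi k rv :=
          Finset.mem_filter.2 ⟨Finset.mem_range.2 hmk, hmk, heq⟩
        rw [if_pos hmem, heq, ← hcast, ihm]
        omega
  funext i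
  apply Fin.ext
  have := main (i : ℕ) i.isLt
  have he : (⟨(i : ℕ), i.isLt⟩ : Fin (k + 1)) = i := Fin.eta i i.isLt
  rw [he] at this
  exact this.symm

lemma sign_card (k : ℕ) (S : Finset ℕ) (hS : S ⊆ Finset.range k) :
    (Finset.univ.filter (fun i : Fin k =>
        (Phi k S i.castSucc : ℕ) = (Phi k S i.succ : ℕ))).card = k - S.card := by
  classical
  have hfe : Finset.univ.filter (fun i : Fin k =>
        (Phi k S i.castSucc : ℕ) = (Phi k S i.succ : ℕ))
      = Finset.univ.filter (fun i : Fin k => ¬ ((i : ℕ) ∈ S)) := by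
    apply Finset.filter_congr
    intro i _
    have h1 := Phi_succ k S i
    by_cases h : (i : ℕ) ∈ S
    · rw [if_pos h] at h1
      simp only [h, not_true_eq_false, iff_false]
      omega
    · rw [if_neg h] at h1
      simp only [h, not_false_eq_true, iff_true]
      omega
  have hin : (Finset.univ.filter (fun i : Fin k => (i : ℕ) ∈ S)).card = S.card := by
    apply Finset.card_bij (fun (i : Fin k) _ => (i : ℕ))
    · intro a ha; exact (Finset.mem_filter.1 ha).2
    · intro a _ b _ h; exact Fin.ext h
    · intro b hb
      have hbk : b < k := Finset.mem_range.1 (hS hb)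
      exact ⟨⟨b, hbk⟩, Finset.mem_filter.2 ⟨Finset.mem_univ _, hb⟩, rfl⟩
  have htot := Finset.card_filter_add_card_filter_not
    (s := (Finset.univ : Finset (Fin k))) (fun i : Fin k => (i : ℕ) ∈ S)
  rw [Finset.card_univ, Fintype.card_fin] at htot
  rw [hfe]
  omega

lemma final_reindex (k : ℕ) (ns : ℕ → ℕ) :
    ∑ S ∈ (Finset.range k).powerset, (-1 : ℤ) ^ (k - S.card) *
        ((∏ i ∈ Finset.range (k + 1),
          (1 + (S.filter (· < i)).card) ^ (ns i + 1) : ℕ) : ℤ)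
      = ∑ rv ∈ Finset.univ.filter (fun rv : Fin (k + 1) → Fin (k + 2) =>
            (rv 0 : ℕ) = 1 ∧ ∀ i : Fin k,
              (rv i.succ : ℕ) = (rv i.castSucc : ℕ) ∨
              (rv i.succ : ℕ) = (rv i.castSucc : ℕ) + 1),
          (-1 : ℤ) ^ (Finset.univ.filter
              (fun i : Fin k => (rv i.castSucc : ℕ) = (rv i.succ : ℕ))).card *
            ∏ i : Fin (k + 1), ((rv i : ℕ) : ℤ) ^ (ns i + 1) := by
  classical
  refine Finset.sum_nbij' (fun S => Phi k S) (fun rv => Psi k rv) ?_ ?_ ?_ ?_ ?_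
  · intro S _
    exact Phi_mem_filter k S
  · intro rv hrv
    exact Finset.mem_powerset.2 (Psi_subset k rv)
  · intro S hS
    exact Psi_Phi k S (Finset.mem_powerset.1 hS)
  · intro rv hrv
    obtain ⟨-, h0, hstep⟩ := Finset.mem_filter.1 hrv
    exact Phi_Psi k rv h0 hstep
  · intro S hS
    have hS' := Finset.mem_powerset.1 hS
    rw [sign_card k S hS']
    congr 1
    push_cast
    rw [← Fin.prod_univ_eq_prod_range
      (fun m => ((1 : ℤ) + ((S.filter (· < m)).card : ℤ)) ^ (ns m + 1)) (k + 1)]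
    apply Finset.prod_congr rfl
    intro i _
    have hv : ((Phi k S i : ℕ) : ℤ) = 1 + ((S.filter (· < (i : ℕ))).card : ℤ) := by
      show (((1 + (S.filter (· < (i : ℕ))).card : ℕ)) : ℤ) = _
      push_cast
      ring
    rw [hv]

/-- Ehrenborg–Steingrimsson inclusion–exclusion formula: the number of permutations of
`[n]` whose excedance set is exactly the set of `k` separator positions of the word
`a^{n₁} b a^{n₂} b ⋯ a^{n_k} b a^{n_{k+1}}` equals
`∑_{r ∈ R_k} (-1)^{h(r)} ∏ r_i^{n_i+1}`. -/
theorem stmt3 (k n : ℕ) (ns : ℕ → ℕ)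
    (hn : n = (∑ i ∈ Finset.range (k + 1), ns i) + k + 1) :
    (Nat.card {σ : Equiv.Perm (Fin n) //
        ∀ i : Fin n, ((i : ℕ) < (σ i : ℕ) ↔
          ∃ j < k, (i : ℕ) = (∑ m ∈ Finset.range (j + 1), ns m) + j)} : ℤ)
      = ∑ rv ∈ Finset.univ.filter (fun rv : Fin (k + 1) → Fin (k + 2) =>
            (rv 0 : ℕ) = 1 ∧ ∀ i : Fin k,
              (rv i.succ : ℕ) = (rv i.castSucc : ℕ) ∨
              (rv i.succ : ℕ) = (rv i.castSucc : ℕ) + 1),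
          (-1 : ℤ) ^ (Finset.univ.filter
              (fun i : Fin k => (rv i.castSucc : ℕ) = (rv i.succ : ℕ))).card *
            ∏ i : Fin (k + 1), ((rv i : ℕ) : ℤ) ^ (ns i + 1) := by

  classical
  have hlt : ∀ j < k, sep ns j < n := by
    intro j hj
    have hsum : ∑ m ∈ Finset.range (j + 1), ns m ≤ ∑ m ∈ Finset.range (k + 1), ns m :=
      Finset.sum_le_sum_of_subset (Finset.range_subset_range.2 (by omega))
    unfold sep
    omega
  have e : {σ : Equiv.Perm (Fin n) // ∀ i : Fin n, ((i : ℕ) < (σ i : ℕ) ↔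
        ∃ j < k, (i : ℕ) = (∑ m ∈ Finset.range (j + 1), ns m) + j)}
      ≃ {σ : Equiv.Perm (Fin n) // ∀ i : Fin n, ((i : ℕ) < (σ i : ℕ) ↔
        (i : ℕ) ∈ (Finset.range k).image (sep ns))} := by
    apply Equiv.subtypeEquivRight
    intro σ
    apply forall_congr'
    intro i
    have hiff : (∃ j < k, (i : ℕ) = (∑ m ∈ Finset.range (j + 1), ns m) + j)
        ↔ (i : ℕ) ∈ (Finset.range k).image (sep ns) := by
      simp only [Finset.mem_image, Finset.mem_range, sep]
      constructor
      · rintro ⟨j, hj, hij⟩; exact ⟨j, hj, hij.symm⟩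
      · rintro ⟨j, hj, hij⟩; exact ⟨j, hj, hij.symm⟩
    rw [hiff]
  rw [Nat.card_congr e, M_eq_alt_sum k n ns hlt]
  rw [Finset.sum_congr rfl (fun S hS => by
    rw [N_eq_prod k n ns hn S (Finset.mem_powerset.1 hS)])]
  exact final_reindex k ns
end

section
/- In G_{r,n} with r ≥ 2, for n+1 ≤ k ≤ n(r-1), the number of elements whose excedance word is b^k a^{rn-1-k} equals n!. -/
/-- Entry of the excedance matrix of the colored permutation `π = (z, τ) ∈ G_{r,n}`
at letter `i` with color `j` (`0 ≤ j ≤ r-1`): it is `b` (encoded `True`) iff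
`π(i^{[j]}) > i^{[j]}` in the color order
`1^{[r-1]} < ⋯ < n^{[r-1]} < ⋯ < 1^{[0]} < ⋯ < n^{[0]}`.
Here `π(i^{[j]}) = τ(i)^{[(z_{τ(i)} + j) mod r]}`, and a letter with a strictly
smaller color, or the same color and a larger index, is larger. -/
def excB (r n : ℕ) (z : Fin n → Fin r) (τ : Equiv.Perm (Fin n)) (i : Fin n) (j : ℕ) :
    Prop :=
  ((z (τ i) : ℕ) + j) % r < j ∨
    (((z (τ i) : ℕ) + j) % r = j ∧ (i : ℕ) < (τ i : ℕ))

/-- `π = (z, τ)` has excedance word `b^k a^{rn-1-k}`: reading the excedance matrix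
row by row from color `r-1` down to color `0` (the entry `(i,j)` sits at position
`(r-1-j)·n + i`, 0-based) and dropping the last entry, the first `k` entries are `b`
and the rest are `a`. -/
def hasWordBA (r n k : ℕ) (z : Fin n → Fin r) (τ : Equiv.Perm (Fin n)) : Prop :=
  ∀ (i : Fin n) (j : Fin r), (r - 1 - (j : ℕ)) * n + (i : ℕ) < r * n - 1 →
    (excB r n z τ i (j : ℕ) ↔ (r - 1 - (j : ℕ)) * n + (i : ℕ) < k)

/-- `[b^k a^{rn-1-k}]`: the number of colored permutations in `G_{r,n}` whose
excedance word is `b^k a^{rn-1-k}`. -/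
noncomputable def cntBA (r n k : ℕ) : ℕ :=
  Nat.card {π : (Fin n → Fin r) × Equiv.Perm (Fin n) // hasWordBA r n k π.1 π.2}

/-- `c_i(π) = z_i(π⁻¹)`: the color attached to `i` by the inverse of `π = (z, τ)`,
namely `(- z_{τ(i)}) mod r`. -/
def cVal (r n : ℕ) (z : Fin n → Fin r) (τ : Equiv.Perm (Fin n)) (i : Fin n) : ℕ :=
  (r - (z (τ i) : ℕ)) % r

/-!
Write `c_i = z_{τ(i)}` and number the rows of the excedance matrix from the top, row `t` holding
color `r - 1 - t`. Entry `(i, t)` is `b` iff `t < c_i`, unless `c_i = 0`, in which case column `i`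
is constant (`b` iff `i < τ(i)`). The word `b^k a^{rn-1-k}` prescribes `b` in exactly the top
`⌊k/n⌋ + [i < k mod n]` entries of column `i`. For `n ≤ k ≤ n(r-1)` that number is positive and
smaller than the column height, except possibly in the last column, which loses its bottom entry;
but that column cannot be constantly `b`, as `i < τ(i)` fails for the largest `i`. So no column is
constant and the word forces `c_i = ⌊k/n⌋ + [i < k mod n]`: `z` is determined by `τ`, and `τ` is
arbitrary.
-/

def colFill (n k i : ℕ) : ℕ := k / n + if i < k % n then 1 else 0

section colFill

variable {n k i : ℕ}

theorem lt_colFill_iff {t : ℕ} (hi : i < n) : t < colFill n k i ↔ t * n + i < k := by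
  have hk := Nat.div_add_mod' k n
  have hs := Nat.mod_lt k (i.zero_le.trans_lt hi)
  unfold colFill
  rcases lt_trichotomy t (k / n) with h | rfl | h
  · have := Nat.mul_le_mul_right n (Nat.succ_le_of_lt h)
    rw [Nat.succ_mul] at this
    split_ifs <;> omega
  · split_ifs <;> omega
  · have := Nat.mul_le_mul_right n (Nat.succ_le_of_lt h)
    rw [Nat.succ_mul] at this
    split_ifs <;> omega

theorem colFill_pos (hi : i < n) (hk : n ≤ k) : 0 < colFill n k i := by
  rw [lt_colFill_iff hi]; omega

theorem colFill_le_of_le_mul {m : ℕ} (hi : i < n) (hk : k ≤ m * n) : colFill n k i ≤ m := by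
  rw [← not_lt, lt_colFill_iff hi]; omega

theorem colFill_mul_sub_one {r : ℕ} (hn : 0 < n) (hr : 0 < r) :
    colFill n (r * n - 1) i = r - 1 + if i < n - 1 then 1 else 0 := by
  have h : r * n - 1 = (n - 1) + (r - 1) * n := by
    rcases r with _ | r
    · omega
    · simp only [Nat.add_sub_cancel, Nat.succ_mul]; omega
  rw [colFill, h, Nat.add_mul_div_right _ _ hn, Nat.add_mul_mod_self_right,
    Nat.div_eq_of_lt (by omega), Nat.mod_eq_of_lt (by omega), zero_add]

end colFill

theorem excB_iff {r n : ℕ} (z : Fin n → Fin r) (τ : Equiv.Perm (Fin n)) (i : Fin n) {j : ℕ}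
    (hj : j < r) :
    excB r n z τ i j ↔
      (0 < (z (τ i) : ℕ) ∧ r - 1 - j < z (τ i)) ∨ ((z (τ i) : ℕ) = 0 ∧ (i : ℕ) < τ i) := by
  have hc := (z (τ i)).isLt
  unfold excB
  by_cases h : (z (τ i) : ℕ) + j < r
  · rw [Nat.mod_eq_of_lt h]; omega
  · rw [Nat.mod_eq_sub_mod (by omega), Nat.mod_eq_of_lt (by omega)]; omega

theorem hasWordBA_iff_forall_row {r n k : ℕ} (z : Fin n → Fin r) (τ : Equiv.Perm (Fin n)) :
    hasWordBA r n k z τ ↔ ∀ i : Fin n, ∀ t < colFill n (r * n - 1) i,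
      ((0 < (z (τ i) : ℕ) ∧ t < z (τ i)) ∨ ((z (τ i) : ℕ) = 0 ∧ (i : ℕ) < τ i) ↔
        t < colFill n k i) := by
  refine forall_congr' fun i => ?_
  simp only [lt_colFill_iff i.isLt]
  constructor
  · intro h t ht
    have htr : t < r := by
      by_contra! hrt
      have := Nat.mul_le_mul_right n hrt
      omega
    have h := h ⟨r - 1 - t, by omega⟩
    rw [excB_iff z τ i (by omega), show r - 1 - (r - 1 - t) = t by omega] at h
    exact h ht
  · intro h j hj
    rw [excB_iff z τ i j.isLt]
    exact h _ hj

theorem forall_lt_iff_lt_iff_eq {c f m : ℕ} {e : Prop} (hf : 0 < f) (hfm : f ≤ m) (hcm : c ≤ m)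
    (he : f = m → ¬e) :
    (∀ t < m, ((0 < c ∧ t < c) ∨ (c = 0 ∧ e) ↔ t < f)) ↔ c = f := by
  constructor
  · intro h
    have hne : ¬(c = 0 ∧ e) := by
      rintro ⟨rfl, he'⟩
      rcases hfm.lt_or_eq with hfm | hfm
      · exact lt_irrefl f ((h f hfm).1 (Or.inr ⟨rfl, he'⟩))
      · exact he hfm he'
    have hc : 0 < c := by
      rcases (h 0 (by omega)).2 hf with ⟨hc, -⟩ | hc0
      · exact hc
      · exact absurd hc0 hne
    have hcf : ¬c < f := fun hcf => by
      rcases (h c (by omega)).2 hcf with ⟨-, h⟩ | h <;> omega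
    have hfc : ¬f < c := fun hfc => by
      rcases hfm.lt_or_eq with hfm | hfm
      · exact lt_irrefl f ((h f hfm).1 (Or.inl ⟨hc, hfc⟩))
      · omega
    omega
  · rintro rfl t -
    constructor
    · rintro (⟨-, h⟩ | ⟨h, -⟩)
      · exact h
      · omega
    · exact fun h => Or.inl ⟨hf, h⟩

theorem hasWordBA_iff {r n k : ℕ} (hn : 0 < n) (hk₁ : n ≤ k) (hk₂ : k ≤ n * (r - 1))
    (z : Fin n → Fin r) (τ : Equiv.Perm (Fin n)) :
    hasWordBA r n k z τ ↔ ∀ i, (z (τ i) : ℕ) = colFill n k i := by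
  have hr : 0 < r := Nat.pos_of_ne_zero (by rintro rfl; simp at hk₂; omega)
  rw [hasWordBA_iff_forall_row]
  refine forall_congr' fun i => ?_
  have hfr : colFill n k i ≤ r - 1 := colFill_le_of_le_mul i.isLt (by rwa [mul_comm])
  have hc := (z (τ i)).isLt
  rw [colFill_mul_sub_one hn hr]
  refine forall_lt_iff_lt_iff_eq (colFill_pos i.isLt hk₁) (by omega) (by omega) fun hm => ?_
  have hi : (i : ℕ) = n - 1 := by split_ifs at hm <;> omega
  have := (τ i).isLt
  omega

def subtypeCompEqEquivPerm {α β : Type*} (F : α → β) :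
    {p : (α → β) × Equiv.Perm α // ∀ a, p.1 (p.2 a) = F a} ≃ Equiv.Perm α where
  toFun p := p.1.2
  invFun σ := ⟨(F ∘ σ.symm, σ), fun a => by simp⟩
  left_inv := by
    rintro ⟨⟨z, σ⟩, h⟩
    ext a
    · simpa using (h (σ.symm a)).symm
    · rfl
  right_inv _ := rfl

theorem stmt5_general (r n k : ℕ)
    (hk1 : n + 1 ≤ k) (hk2 : k ≤ n * (r - 1)) :
    cntBA r n k = Nat.factorial n := by
  have hn : 0 < n := Nat.pos_of_ne_zero (by rintro rfl; omega)
  have hr : 0 < r := Nat.pos_of_ne_zero (by rintro rfl; simp at hk2; omega)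
  have hF (i : Fin n) : colFill n k i < r :=
    (colFill_le_of_le_mul i.isLt (by rwa [mul_comm] : k ≤ (r - 1) * n)).trans_lt (by omega)
  let F : Fin n → Fin r := fun i => ⟨colFill n k i, hF i⟩
  have hchar (z : Fin n → Fin r) (τ : Equiv.Perm (Fin n)) :
      hasWordBA r n k z τ ↔ ∀ i, z (τ i) = F i := by
    simp only [hasWordBA_iff hn (by omega) hk2, Fin.ext_iff, F]
  have e := (Equiv.subtypeEquivRight fun p : (Fin n → Fin r) × Equiv.Perm (Fin n) =>
    hchar p.1 p.2).trans (subtypeCompEqEquivPerm F)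
  rw [cntBA, Nat.card_congr e, Nat.card_perm, Nat.card_fin]

/-- In `G_{r,n}` with `r ≥ 2`, for `n+1 ≤ k ≤ n(r-1)`,
`[b^k a^{rn-1-k}] = n!`. -/
theorem stmt5 (r n k : ℕ) (hr : 2 ≤ r) (hn : 0 < n)
    (hk1 : n + 1 ≤ k) (hk2 : k ≤ n * (r - 1)) :
    cntBA r n k = Nat.factorial n :=
  stmt5_general r n k hk1 hk2
end

section
/- For π ∈ G_{r,n} and i ∈ [n]: c_i(π) = 0 if and only if all entries of the i-th column of the excedance matrix M(π) are equal; and in that case the top entry t_i^{r-1} = a if and only if |π|(i) ≤ i. -/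
/-- `c_i(π) = 0` iff all entries of the `i`-th column of the excedance matrix `M(π)`
are equal; and in that case the top entry `t_i^{r-1}` is `a` iff `|π|(i) ≤ i`. -/
theorem stmt11 (r n : ℕ) (hr : 0 < r) (z : Fin n → Fin r) (τ : Equiv.Perm (Fin n))
    (i : Fin n) :
    (cVal r n z τ i = 0 ↔
      ∀ j j' : Fin r, (excB r n z τ i (j : ℕ) ↔ excB r n z τ i (j' : ℕ))) ∧
    (cVal r n z τ i = 0 →
      (¬ excB r n z τ i (r - 1) ↔ (τ i : ℕ) ≤ (i : ℕ))) := by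
  have hc := (z (τ i)).isLt
  have hzero : cVal r n z τ i = 0 ↔ (z (τ i) : ℕ) = 0 := by
    unfold cVal
    rcases Nat.eq_zero_or_pos (z (τ i) : ℕ) with h | h
    · simp [h]
    · rw [Nat.mod_eq_of_lt (by omega)]; omega
  constructor
  · rw [hzero]
    constructor
    · intro h0 j j'
      unfold excB
      rw [h0]
      simp only [Nat.zero_add]
      rw [Nat.mod_eq_of_lt j.isLt, Nat.mod_eq_of_lt j'.isLt]
      omega
    · intro h
      by_contra hne
      have hpos : 0 < (z (τ i) : ℕ) := Nat.pos_of_ne_zero hne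
      have h0 : ¬ excB r n z τ i ((⟨0, hr⟩ : Fin r) : ℕ) := by
        unfold excB
        simp only [Nat.add_zero]
        rw [Nat.mod_eq_of_lt hc]
        omega
      have h1 : excB r n z τ i ((⟨r - (z (τ i) : ℕ), by omega⟩ : Fin r) : ℕ) := by
        unfold excB
        left
        have he : (z (τ i) : ℕ) + (r - (z (τ i) : ℕ)) = r := by omega
        simp only
        rw [he, Nat.mod_self]
        omega
      exact h0 ((h _ _).mpr h1)
  · rw [hzero]
    intro h0
    unfold excB
    rw [h0]
    simp only [Nat.zero_add]
    rw [Nat.mod_eq_of_lt (by omega : r - 1 < r)]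
    omega
end

section
/- For any ab-word w of length rn-1 arising as the excedance word of some element of G_{r,n}, the map π ↦ |π| (forgetting colors) is a bijection from {π ∈ G_{r,n} : w_π = w} onto {σ ∈ S_n : the excedance word of σ matches Ψ(w)}, where Ψ(w) ∈ {a, b, a+b}^{n-1} records for each column i of the matrix form of w: 'a' if all entries are a, 'b' if all entries are b, and 'a+b' otherwise (position i with value a+b imposing no constraint on whether i is an excedance of σ). -/
/-- `c` stands for the color shift `z_{τ(i)}` and `e` for "`i` is an excedance of `|π|`". -/
def excEntry (r c : ℕ) (e : Prop) (j : ℕ) : Prop := if c = 0 then e else r - c ≤ j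

theorem excB_iff_excEntry {r n : ℕ} (z : Fin n → Fin r) (τ : Equiv.Perm (Fin n)) (i : Fin n)
    {j : ℕ} (hj : j < r) :
    excB r n z τ i j ↔ excEntry r (z (τ i)) ((i : ℕ) < τ i) j := by
  have hc := (z (τ i)).isLt
  unfold excB excEntry
  generalize (z (τ i) : ℕ) = c at *
  rcases Nat.lt_or_ge (c + j) r with h | h
  · rw [Nat.mod_eq_of_lt h]
    by_cases hc0 : c = 0
    · simp [hc0]
    · rw [if_neg hc0]
      omega
  · rw [Nat.mod_eq_sub_mod h, Nat.mod_eq_of_lt (by omega), if_neg (by omega)]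
    omega

theorem excEntry.of_forall {r c : ℕ} {e : Prop} (hc : c < r) (h : ∀ j < r, excEntry r c e j) :
    e := by
  have h0 := h 0 (by omega)
  unfold excEntry at h0
  split_ifs at h0
  · exact h0
  · omega

theorem excEntry.not_of_forall_not {r c : ℕ} {e : Prop} (hc : c < r)
    (h : ∀ j < r, ¬excEntry r c e j) : ¬e := by
  by_cases hc0 : c = 0
  · simpa [excEntry, hc0] using h 0 (by omega)
  · exact absurd (by simp only [excEntry, if_neg hc0]; omega) (h (r - 1) (by omega))

theorem eq_zero_of_excEntry_iff {r c c' : ℕ} {e e' : Prop} (hc' : c' < r)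
    (hpos : ∀ j, 0 < j → j < r → (excEntry r c e j ↔ excEntry r c' e' j))
    (hzero : (excEntry r c e 0 ↔ excEntry r c' e' 0) ∨ (¬e ∧ ¬e')) (hc0 : c = 0) : c' = 0 := by
  by_contra hc0'
  have he : e := by
    have := (hpos (r - 1) (by omega) (by omega)).2 (by rw [excEntry, if_neg hc0']; omega)
    rwa [excEntry, if_pos hc0] at this
  rcases hzero with h | ⟨hne, -⟩
  · have := h.1 (by rwa [excEntry, if_pos hc0])
    rw [excEntry, if_neg hc0'] at this
    omega
  · exact hne he

theorem eq_of_excEntry_iff {r c c' : ℕ} {e e' : Prop} (hc : c < r) (hc' : c' < r)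
    (hpos : ∀ j, 0 < j → j < r → (excEntry r c e j ↔ excEntry r c' e' j))
    (hzero : (excEntry r c e 0 ↔ excEntry r c' e' 0) ∨ (¬e ∧ ¬e')) : c = c' := by
  have hpos' j hj hjr := (hpos j hj hjr).symm
  have hzero' := hzero.imp Iff.symm And.symm
  by_cases hc0 : c = 0
  · rw [hc0, eq_zero_of_excEntry_iff hc' hpos hzero hc0]
  by_cases hc0' : c' = 0
  · exact absurd (eq_zero_of_excEntry_iff hc hpos' hzero' hc0') hc0
  have h1 := (hpos (r - c) (by omega) (by omega)).1
  have h2 := (hpos' (r - c') (by omega) (by omega)).1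
  simp only [excEntry, if_neg hc0, if_neg hc0'] at h1 h2
  omega

def HasExcWord (r n : ℕ) (B : Fin n → Fin r → Bool) (z : Fin n → Fin r)
    (τ : Equiv.Perm (Fin n)) : Prop :=
  ∀ (i : Fin n) (j : Fin r), ((i : ℕ), (j : ℕ)) ≠ (n - 1, 0) →
    (excB r n z τ i (j : ℕ) ↔ B i j = true)

def MatchesPsi (r n : ℕ) (B : Fin n → Fin r → Bool) (σ : Equiv.Perm (Fin n)) : Prop :=
  ∀ i : Fin n, (i : ℕ) < n - 1 →
    ((∀ j : Fin r, B i j = true) → (i : ℕ) < (σ i : ℕ)) ∧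
    ((∀ j : Fin r, B i j = false) → (σ i : ℕ) ≤ (i : ℕ))

namespace HasExcWord

variable {r n : ℕ} {B : Fin n → Fin r → Bool} {z z' : Fin n → Fin r}
  {τ τ' : Equiv.Perm (Fin n)}

theorem excEntry_iff (h : HasExcWord r n B z τ) {i : Fin n} (hi : (i : ℕ) < n - 1)
    (j : Fin r) : excEntry r (z (τ i)) ((i : ℕ) < τ i) j ↔ B i j = true :=
  (excB_iff_excEntry z τ i j.isLt).symm.trans (h i j (by simp only [ne_eq, Prod.mk.injEq]; omega))

theorem matchesPsi (h : HasExcWord r n B z τ) : MatchesPsi r n B τ := fun i hi =>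
  ⟨fun hb => excEntry.of_forall (z (τ i)).isLt fun j hj => (h.excEntry_iff hi ⟨j, hj⟩).2 (hb _),
    fun ha => not_lt.1 <| excEntry.not_of_forall_not (z (τ i)).isLt fun j hj =>
      (h.excEntry_iff hi ⟨j, hj⟩).not.2 (by simp [ha])⟩

theorem color_eq (h : HasExcWord r n B z τ) (h' : HasExcWord r n B z' τ') (i : Fin n) :
    z (τ i) = z' (τ' i) := by
  have hcol (j : Fin r) (hij : ((i : ℕ), (j : ℕ)) ≠ (n - 1, 0)) :
      excEntry r (z (τ i)) ((i : ℕ) < τ i) j ↔ excEntry r (z' (τ' i)) ((i : ℕ) < τ' i) j := by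
    rw [← excB_iff_excEntry z τ i j.isLt, ← excB_iff_excEntry z' τ' i j.isLt, h i j hij,
      h' i j hij]
  have hr : 0 < r := (z i).pos
  refine Fin.ext <| eq_of_excEntry_iff (z (τ i)).isLt (z' (τ' i)).isLt
    (fun j hj hjr => hcol ⟨j, hjr⟩ (by simp only [ne_eq, Prod.mk.injEq]; omega)) ?_
  by_cases hi : (i : ℕ) = n - 1
  · right
    have := (τ i).isLt
    have := (τ' i).isLt
    omega
  · exact .inl (hcol ⟨0, hr⟩ (by simp [hi]))

theorem excedance_iff_of_color_eq_zero (h : HasExcWord r n B z τ) {σ : Equiv.Perm (Fin n)}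
    (hσ : MatchesPsi r n B σ) {i : Fin n} (hc0 : (z (τ i) : ℕ) = 0) :
    (i : ℕ) < σ i ↔ (i : ℕ) < τ i := by
  by_cases hi : (i : ℕ) < n - 1
  · have hcol (j : Fin r) : B i j = true ↔ (i : ℕ) < τ i := by
      rw [← h.excEntry_iff hi j, excEntry, if_pos hc0]
    obtain ⟨hb, ha⟩ := hσ i hi
    by_cases he : (i : ℕ) < τ i
    · exact iff_of_true (hb fun j => (hcol j).2 he) he
    · refine iff_of_false (not_lt.2 (ha fun j => ?_)) he
      exact Bool.eq_false_iff.2 fun hbj => he ((hcol j).1 hbj)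
  · have := (σ i).isLt
    have := (τ i).isLt
    omega

theorem recolor (h : HasExcWord r n B z τ) {σ : Equiv.Perm (Fin n)} (hσ : MatchesPsi r n B σ) :
    HasExcWord r n B (fun k => z (τ (σ⁻¹ k))) σ := by
  intro i j hij
  rw [excB_iff_excEntry _ σ i j.isLt, ← h i j hij, excB_iff_excEntry z τ i j.isLt,
    Equiv.Perm.inv_def, Equiv.symm_apply_apply]
  unfold excEntry
  split_ifs with hc0
  · exact h.excedance_iff_of_color_eq_zero hσ hc0
  · rfl

end HasExcWord

theorem stmt13_general (r n : ℕ) (B : Fin n → Fin r → Bool)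
    (hB : ∃ (z : Fin n → Fin r) (τ : Equiv.Perm (Fin n)),
      ∀ (i : Fin n) (j : Fin r), ((i : ℕ), (j : ℕ)) ≠ (n - 1, 0) →
        (excB r n z τ i (j : ℕ) ↔ B i j = true)) :
    ∃ f : {π : (Fin n → Fin r) × Equiv.Perm (Fin n) //
            ∀ (i : Fin n) (j : Fin r), ((i : ℕ), (j : ℕ)) ≠ (n - 1, 0) →
              (excB r n π.1 π.2 i (j : ℕ) ↔ B i j = true)} ≃
          {σ : Equiv.Perm (Fin n) //
            ∀ i : Fin n, (i : ℕ) < n - 1 →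
              ((∀ j : Fin r, B i j = true) → (i : ℕ) < (σ i : ℕ)) ∧
              ((∀ j : Fin r, B i j = false) → (σ i : ℕ) ≤ (i : ℕ))},
      ∀ π, ((f π : Equiv.Perm (Fin n))) = π.val.2 := by
  obtain ⟨z₀, τ₀, h₀⟩ := hB
  refine ⟨{ toFun := fun π => ⟨π.1.2, HasExcWord.matchesPsi π.2⟩
            invFun := fun σ => ⟨(fun k => z₀ (τ₀ (σ.1⁻¹ k)), σ.1), HasExcWord.recolor h₀ σ.2⟩
            left_inv := fun π => ?_
            right_inv := fun _ => rfl }, fun _ => rfl⟩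
  obtain ⟨⟨z, τ⟩, hπ⟩ := π
  refine Subtype.ext (Prod.ext (funext fun k => ?_) rfl)
  simpa using HasExcWord.color_eq h₀ hπ (τ⁻¹ k)

/-- For any ab-word `w` (encoded by its matrix form `B : Fin n → Fin r → Bool`,
with `B i j = true` meaning `b`; the last entry, at letter `n-1` color `0`, is
dropped) arising as the excedance word of some element of `G_{r,n}`, the map
`π ↦ |π|` is a bijection from `{π ∈ G_{r,n} : w_π = w}` onto the set of `σ ∈ S_n`
whose excedance word matches `Ψ(w)`: at each column `i < n-1` that is all-`b`,
`i` is an excedance of `σ`; at each all-`a` column, `i` is a non-excedance; and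
mixed (`a+b`) columns impose no constraint. -/
theorem stmt13 (r n : ℕ) (hr : 0 < r) (B : Fin n → Fin r → Bool)
    (hB : ∃ (z : Fin n → Fin r) (τ : Equiv.Perm (Fin n)),
      ∀ (i : Fin n) (j : Fin r), ((i : ℕ), (j : ℕ)) ≠ (n - 1, 0) →
        (excB r n z τ i (j : ℕ) ↔ B i j = true)) :
    ∃ f : {π : (Fin n → Fin r) × Equiv.Perm (Fin n) //
            ∀ (i : Fin n) (j : Fin r), ((i : ℕ), (j : ℕ)) ≠ (n - 1, 0) →
              (excB r n π.1 π.2 i (j : ℕ) ↔ B i j = true)} ≃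
          {σ : Equiv.Perm (Fin n) //
            ∀ i : Fin n, (i : ℕ) < n - 1 →
              ((∀ j : Fin r, B i j = true) → (i : ℕ) < (σ i : ℕ)) ∧
              ((∀ j : Fin r, B i j = false) → (σ i : ℕ) ≤ (i : ℕ))},
      ∀ π, ((f π : Equiv.Perm (Fin n))) = π.val.2 :=
  stmt13_general r n B hB
end
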